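/- arXiv:2311.00318 — 4 statements merged into one kernel-verified Lean document; each statement's English description precedes it below -/
import Mathlib

section
/- Let b_real, b_fake > 0 satisfy e^{-b_real} + e^{-b_fake} ≤ 1, and let p, q ≥ 0 with (p,q) ≠ (0,0). Define g(d) = p·h(-log d, b_real) + q·h(-log(1-d), b_fake) on (0,1), where h(L,b) = |L - b| + b is the flooding function. Then every minimizer of g lies in the set {1 - e^{-b_fake}, e^{-b_real}}. -/
open Real Set

/-
With `a = e^{-b_real} ≤ c = 1 - e^{-b_fake}`, the objective is `const - (p log d - q log (1 - d))`
on `(0, a]`, `const + p log d + q log (1 - d)` on `[a, c]` and `const + (p log d - q log (1 - d))`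
on `[c, 1)`. So it strictly decreases up to `a`, strictly increases from `c` on, and is strictly
concave in between, where it therefore stays above the smaller of its values at `a` and `c`.
-/

noncomputable def flood (L b : ℝ) : ℝ := |L - b| + b

lemma flood_of_le {L b : ℝ} (h : b ≤ L) : flood L b = L := by
  rw [flood, abs_of_nonneg (sub_nonneg.2 h), sub_add_cancel]

lemma flood_of_ge {L b : ℝ} (h : L ≤ b) : flood L b = 2 * b - L := by
  rw [flood, abs_of_nonpos (sub_nonpos.2 h)]; ring

lemma flood_neg_log_of_le_exp {x b : ℝ} (hx : 0 < x) (h : x ≤ exp (-b)) :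
    flood (-log x) b = -log x :=
  flood_of_le (le_neg.2 ((log_le_iff_le_exp hx).2 h))

lemma flood_neg_log_of_exp_le {x b : ℝ} (h : exp (-b) ≤ x) :
    flood (-log x) b = 2 * b + log x := by
  rw [flood_of_ge (neg_le.1 ((le_log_iff_exp_le ((exp_pos _).trans_le h)).2 h))]; ring

section WeightedLog

variable {p q : ℝ}

lemma strictMonoOn_mul_log_sub_mul_log_one_sub (hp : 0 ≤ p) (hq : 0 ≤ q)
    (hpq : 0 < p ∨ 0 < q) :
    StrictMonoOn (fun x => p * log x - q * log (1 - x)) (Ioo 0 1) := by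
  intro x hx y hy hxy
  have hlog : log x < log y := log_lt_log hx.1 hxy
  have hlog_one_sub : log (1 - y) < log (1 - x) := log_lt_log (by linarith [hy.2]) (by linarith)
  rcases hpq with hp' | hq'
  · nlinarith [mul_le_mul_of_nonneg_left hlog_one_sub.le hq]
  · nlinarith [mul_le_mul_of_nonneg_left hlog.le hp]

lemma strictConcaveOn_mul_log_add_mul_log_one_sub (hp : 0 ≤ p) (hq : 0 ≤ q)
    (hpq : 0 < p ∨ 0 < q) :
    StrictConcaveOn ℝ (Ioo 0 1) (fun x => p * log x + q * log (1 - x)) := by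
  refine ⟨convex_Ioo 0 1, fun x hx y hy hxy a b ha hb hab => ?_⟩
  have hlog := strictConcaveOn_log_Ioi.2 hx.1 hy.1 hxy ha hb hab
  have hlog_one_sub := strictConcaveOn_log_Ioi.2 (x := 1 - x) (y := 1 - y)
    (sub_pos.2 hx.2) (sub_pos.2 hy.2) (by contrapose! hxy; linarith) ha hb hab
  have hcombo : a • (1 - x) + b • (1 - y) = 1 - (a • x + b • y) := by
    simp only [smul_eq_mul]; linear_combination hab
  rw [hcombo] at hlog_one_sub
  simp only [smul_eq_mul] at hlog hlog_one_sub ⊢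
  rcases hpq with hp' | hq'
  · nlinarith [mul_le_mul_of_nonneg_left hlog_one_sub.le hq]
  · nlinarith [mul_le_mul_of_nonneg_left hlog.le hp]

end WeightedLog

noncomputable def floodedBCE (breal bfake p q d : ℝ) : ℝ :=
  p * flood (-log d) breal + q * flood (-log (1 - d)) bfake

section FloodedBCE

variable {breal bfake p q d : ℝ}

lemma floodedBCE_of_le (hd : 0 < d) (hdr : d ≤ exp (-breal)) (hdf : d ≤ 1 - exp (-bfake)) :
    floodedBCE breal bfake p q d = 2 * q * bfake - (p * log d - q * log (1 - d)) := by
  rw [floodedBCE, flood_neg_log_of_le_exp hd hdr, flood_neg_log_of_exp_le (by linarith)]; ring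

lemma floodedBCE_of_mem_Icc (hdr : exp (-breal) ≤ d) (hdf : d ≤ 1 - exp (-bfake)) :
    floodedBCE breal bfake p q d =
      2 * p * breal + 2 * q * bfake + (p * log d + q * log (1 - d)) := by
  rw [floodedBCE, flood_neg_log_of_exp_le hdr, flood_neg_log_of_exp_le (by linarith)]; ring

lemma floodedBCE_of_ge (hd : d < 1) (hdr : exp (-breal) ≤ d) (hdf : 1 - exp (-bfake) ≤ d) :
    floodedBCE breal bfake p q d = 2 * p * breal + (p * log d - q * log (1 - d)) := by
  rw [floodedBCE, flood_neg_log_of_exp_le hdr,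
    flood_neg_log_of_le_exp (sub_pos.2 hd) (by linarith)]; ring

lemma floodedBCE_exp_lt (hp : 0 ≤ p) (hq : 0 ≤ q) (hpq : 0 < p ∨ 0 < q)
    (hsum : exp (-breal) + exp (-bfake) ≤ 1) (hd : 0 < d) (hdr : d < exp (-breal)) :
    floodedBCE breal bfake p q (exp (-breal)) < floodedBCE breal bfake p q d := by
  have hr : exp (-breal) < 1 := by linarith [exp_pos (-bfake)]
  rw [floodedBCE_of_le hd hdr.le (by linarith),
    floodedBCE_of_le (exp_pos _) le_rfl (by linarith)]
  linarith [strictMonoOn_mul_log_sub_mul_log_one_sub hp hq hpq ⟨hd, hdr.trans hr⟩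
    ⟨exp_pos _, hr⟩ hdr]

lemma floodedBCE_one_sub_exp_lt (hp : 0 ≤ p) (hq : 0 ≤ q) (hpq : 0 < p ∨ 0 < q)
    (hsum : exp (-breal) + exp (-bfake) ≤ 1) (hd : d < 1) (hdf : 1 - exp (-bfake) < d) :
    floodedBCE breal bfake p q (1 - exp (-bfake)) < floodedBCE breal bfake p q d := by
  have hf : 0 < 1 - exp (-bfake) := by linarith [exp_pos (-breal)]
  rw [floodedBCE_of_ge hd (by linarith) hdf.le,
    floodedBCE_of_ge (by linarith [exp_pos (-bfake)]) (by linarith) le_rfl]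
  linarith [strictMonoOn_mul_log_sub_mul_log_one_sub hp hq hpq ⟨hf, by linarith⟩
    ⟨hf.trans hdf, hd⟩ hdf]

lemma min_floodedBCE_lt (hp : 0 ≤ p) (hq : 0 ≤ q) (hpq : 0 < p ∨ 0 < q)
    (hdr : exp (-breal) < d) (hdf : d < 1 - exp (-bfake)) :
    min (floodedBCE breal bfake p q (exp (-breal)))
        (floodedBCE breal bfake p q (1 - exp (-bfake))) < floodedBCE breal bfake p q d := by
  have hr : exp (-breal) ∈ Ioo (0 : ℝ) 1 := ⟨exp_pos _, by linarith [exp_pos (-bfake)]⟩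
  have hf : 1 - exp (-bfake) ∈ Ioo (0 : ℝ) 1 := ⟨by linarith [exp_pos (-breal)],
    by linarith [exp_pos (-bfake)]⟩
  rw [floodedBCE_of_mem_Icc hdr.le hdf.le, floodedBCE_of_mem_Icc le_rfl (by linarith),
    floodedBCE_of_mem_Icc (by linarith) le_rfl, min_add_add_left]
  gcongr
  exact (strictConcaveOn_mul_log_add_mul_log_one_sub hp hq hpq).lt_on_openSegment hr hf
    (by linarith) (by rw [openSegment_eq_Ioo (by linarith)]; exact ⟨hdr, hdf⟩)

end FloodedBCE

theorem flooded_bce_minimizers_boundary_general (breal bfake p q : ℝ)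
    (hsum : Real.exp (-breal) + Real.exp (-bfake) ≤ 1)
    (hp : 0 ≤ p) (hq : 0 ≤ q) (hpq : ¬(p = 0 ∧ q = 0)) :
    ∀ d ∈ Ioo (0:ℝ) 1,
      IsMinOn (fun d => p * flood (-Real.log d) breal + q * flood (-Real.log (1 - d)) bfake)
        (Ioo (0:ℝ) 1) d →
      d ∈ ({1 - Real.exp (-bfake), Real.exp (-breal)} : Set ℝ) := by
  intro d ⟨hd0, hd1⟩ hmin
  have hle : ∀ x ∈ Ioo (0 : ℝ) 1,
      floodedBCE breal bfake p q d ≤ floodedBCE breal bfake p q x := isMinOn_iff.1 hmin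
  have hpq : 0 < p ∨ 0 < q := by
    by_contra! h
    exact hpq ⟨le_antisymm h.1 hp, le_antisymm h.2 hq⟩
  have hr : exp (-breal) ∈ Ioo (0 : ℝ) 1 := ⟨exp_pos _, by linarith [exp_pos (-bfake)]⟩
  have hf : 1 - exp (-bfake) ∈ Ioo (0 : ℝ) 1 := ⟨by linarith [exp_pos (-breal)],
    by linarith [exp_pos (-bfake)]⟩
  by_contra hd
  simp only [mem_insert_iff, mem_singleton_iff, not_or] at hd
  rcases lt_or_gt_of_ne hd.2 with hdr | hdr
  · exact (floodedBCE_exp_lt hp hq hpq hsum hd0 hdr).not_ge (hle _ hr)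
  rcases lt_or_gt_of_ne hd.1 with hdf | hdf
  · exact (min_floodedBCE_lt hp hq hpq hdr hdf).not_ge
      (le_min (hle _ hr) (hle _ hf))
  · exact (floodedBCE_one_sub_exp_lt hp hq hpq hsum hd1 hdf).not_ge (hle _ hf)

theorem flooded_bce_minimizers_boundary (breal bfake p q : ℝ)
    (hbr : 0 < breal) (hbf : 0 < bfake)
    (hsum : Real.exp (-breal) + Real.exp (-bfake) ≤ 1)
    (hp : 0 ≤ p) (hq : 0 ≤ q) (hpq : ¬(p = 0 ∧ q = 0)) :
    ∀ d ∈ Ioo (0:ℝ) 1,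
      IsMinOn (fun d => p * flood (-Real.log d) breal + q * flood (-Real.log (1 - d)) bfake)
        (Ioo (0:ℝ) 1) d →
      d ∈ ({1 - Real.exp (-bfake), Real.exp (-breal)} : Set ℝ) :=
  flooded_bce_minimizers_boundary_general breal bfake p q hsum hp hq hpq
end

section
/- Let b_real, b_fake > 0 satisfy e^{-b_real} + e^{-b_fake} > 1, and let p, q > 0 satisfy 1 - e^{-b_fake} < p/(p+q) < e^{-b_real}. Then d* = p/(p+q) is the unique global minimizer over (0,1) of g(d) = p·h(-log d, b_real) + q·h(-log(1-d), b_fake), where h(L,b) = |L-b| + b. -/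
open Real Set

theorem flooded_bce_interior_minimizer (breal bfake p q : ℝ)
    (hbr : 0 < breal) (hbf : 0 < bfake)
    (hsum : 1 < Real.exp (-breal) + Real.exp (-bfake))
    (hp : 0 < p) (hq : 0 < q)
    (hlo : 1 - Real.exp (-bfake) < p / (p + q))
    (hhi : p / (p + q) < Real.exp (-breal)) :
    ∀ d ∈ Ioo (0:ℝ) 1, d ≠ p / (p + q) →
      (p * flood (-Real.log (p / (p + q))) breal
        + q * flood (-Real.log (1 - p / (p + q))) bfake)
      < (p * flood (-Real.log d) breal + q * flood (-Real.log (1 - d)) bfake) := by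
  intro d hd hne
  obtain ⟨hd0, hd1⟩ := hd
  set s := p + q with hs
  have hspos : 0 < s := by positivity
  have hdstar0 : 0 < p / s := by positivity
  have hdstar1 : p / s < 1 := by
    rw [div_lt_one hspos]; linarith
  have h1m : 1 - p / s = q / s := by field_simp; ring
  have hlog1 : breal < -Real.log (p / s) := by
    have := Real.log_lt_log hdstar0 hhi
    rw [Real.log_exp] at this; linarith
  have hlog2 : bfake < -Real.log (1 - p / s) := by
    have h01 : 0 < 1 - p / s := by linarith
    have := Real.log_lt_log h01 (by linarith : 1 - p / s < Real.exp (-bfake))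
    rw [Real.log_exp] at this; linarith
  have hf1 : flood (-Real.log (p / s)) breal = -Real.log (p / s) := by
    unfold flood; rw [abs_of_pos (by linarith)]; ring
  have hf2 : flood (-Real.log (1 - p / s)) bfake = -Real.log (1 - p / s) := by
    unfold flood; rw [abs_of_pos (by linarith)]; ring
  have hg1 : -Real.log d ≤ flood (-Real.log d) breal := by
    unfold flood; have := le_abs_self (-Real.log d - breal); linarith
  have hg2 : -Real.log (1 - d) ≤ flood (-Real.log (1 - d)) bfake := by
    unfold flood; have := le_abs_self (-Real.log (1 - d) - bfake); linarith
  have h1d : 0 < 1 - d := by linarith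
  have h01 : 0 < 1 - p / s := by linarith
  have key : p * (-Real.log (p / s)) + q * (-Real.log (1 - p / s)) <
      p * (-Real.log d) + q * (-Real.log (1 - d)) := by
    have ha : Real.log (d / (p / s)) < d / (p / s) - 1 := by
      apply Real.log_lt_sub_one_of_pos (by positivity)
      intro h
      exact hne ((div_eq_one_iff_eq hdstar0.ne').mp h)
    have hb : Real.log ((1 - d) / (1 - p / s)) < (1 - d) / (1 - p / s) - 1 := by
      apply Real.log_lt_sub_one_of_pos (by positivity)
      intro h
      have := (div_eq_one_iff_eq h01.ne').mp h
      exact hne (by linarith)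
    rw [Real.log_div hd0.ne' hdstar0.ne'] at ha
    rw [Real.log_div h1d.ne' h01.ne'] at hb
    have e1 : p * (d / (p / s) - 1) = d * s - p := by field_simp
    have e2 : q * ((1 - d) / (1 - p / s) - 1) = (1 - d) * s - q := by
      rw [h1m]; field_simp
    have ha' : p * (Real.log d - Real.log (p / s)) < d * s - p := by
      rw [← e1]; exact (mul_lt_mul_iff_right₀ hp).mpr ha
    have hb' : q * (Real.log (1 - d) - Real.log (1 - p / s)) < (1 - d) * s - q := by
      rw [← e2]; exact (mul_lt_mul_iff_right₀ hq).mpr hb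
    have hsum0 : (d * s - p) + ((1 - d) * s - q) = 0 := by rw [hs]; ring
    nlinarith [ha', hb']
  rw [hf1, hf2]
  have := add_le_add (mul_le_mul_of_nonneg_left hg1 hp.le)
    (mul_le_mul_of_nonneg_left hg2 hq.le)
  linarith
end

section
/- Let b_real, b_fake > 0 satisfy e^{-b_real} + e^{-b_fake} > 1, and let p, q ≥ 0 with (p,q) ≠ (0,0) be such that p/(p+q) does NOT lie in the open interval (1 - e^{-b_fake}, e^{-b_real}). Then every minimizer over (0,1) of g(d) = p·h(-log d, b_real) + q·h(-log(1-d), b_fake) lies in {1 - e^{-b_fake}, e^{-b_real}}, where h(L,b) = |L-b| + b. -/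
/-!
Put `a = 1 - e^{-b_fake}` and `c = e^{-b_real}`, so `a < c`. On `[a, c]` neither flood level is
active and `g` is the cross-entropy `-p log d - q log (1 - d)`, which is minimised at
`r = p / (p + q)`. If `r ≤ a`, then to the left of `a` the fake term is flooded and `g` lies above
a strictly decreasing function that agrees with `g` at `a`, while to the right of `a` it lies above
the cross-entropy, which increases strictly past `r`; so `a` is the only possible minimiser.
The case `c ≤ r` is the mirror image under `d ↦ 1 - d`, which swaps `(p, b_real)` with
`(q, b_fake)`.
-/

open Real Set

lemma le_flood (L b : ℝ) : L ≤ flood L b := by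
  unfold flood; linarith [le_abs_self (L - b)]

lemma two_mul_sub_le_flood (L b : ℝ) : 2 * b - L ≤ flood L b := by
  unfold flood; linarith [neg_abs_le (L - b)]

lemma flood_self (b : ℝ) : flood b b = b := by simp [flood]

lemma floodedBCE_one_sub (breal bfake p q d : ℝ) :
    floodedBCE bfake breal q p (1 - d) = floodedBCE breal bfake p q d := by
  rw [floodedBCE, floodedBCE, sub_sub_cancel, add_comm]

lemma IsMinOn.floodedBCE_swap {breal bfake p q d : ℝ}
    (hmin : IsMinOn (floodedBCE breal bfake p q) (Ioo 0 1) d) :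
    IsMinOn (floodedBCE bfake breal q p) (Ioo 0 1) (1 - d) := by
  have hmaps : MapsTo (fun x : ℝ => 1 - x) (Ioo 0 1) (Ioo 0 1) := fun x hx => by
    simp only [mem_Ioo] at hx ⊢; constructor <;> linarith
  have hcomp := hmin.comp_mapsTo hmaps (sub_sub_cancel 1 d)
  have hfun : floodedBCE breal bfake p q ∘ (fun x => 1 - x) = floodedBCE bfake breal q p :=
    funext fun x => by rw [Function.comp_apply, ← floodedBCE_one_sub, sub_sub_cancel]
  rwa [hfun] at hcomp

lemma bce_le_floodedBCE {p q : ℝ} (hp : 0 ≤ p) (hq : 0 ≤ q) (breal bfake d : ℝ) :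
    -p * log d - q * log (1 - d) ≤ floodedBCE breal bfake p q d :=
  calc -p * log d - q * log (1 - d) = p * -log d + q * -log (1 - d) := by ring
    _ ≤ _ := by unfold floodedBCE; gcongr <;> apply le_flood

lemma flooded_fake_branch_le_floodedBCE {p q : ℝ} (hp : 0 ≤ p) (hq : 0 ≤ q)
    (breal bfake d : ℝ) :
    -p * log d + q * (2 * bfake + log (1 - d)) ≤ floodedBCE breal bfake p q d :=
  calc -p * log d + q * (2 * bfake + log (1 - d))
      = p * -log d + q * (2 * bfake - -log (1 - d)) := by ring
    _ ≤ _ := by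
      unfold floodedBCE; gcongr; exacts [le_flood _ _, two_mul_sub_le_flood _ _]

lemma bce_lt_bce_of_ratio_le {p q a d : ℝ} (hp : 0 ≤ p) (hq : 0 < q) (ha : 0 < a)
    (had : a < d) (hd : d < 1) (hr : p * (1 - a) ≤ q * a) :
    -p * log a - q * log (1 - a) < -p * log d - q * log (1 - d) := by
  have hd0 : 0 < d := ha.trans had
  have ha1 : 0 < 1 - a := by linarith
  have hd1 : 0 < 1 - d := by linarith
  have hlog_real : log d - log a ≤ (d - a) / a := by
    rw [← log_div hd0.ne' ha.ne']
    calc log (d / a) ≤ d / a - 1 := log_le_sub_one_of_pos (div_pos hd0 ha)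
      _ = (d - a) / a := by field_simp
  have hlog_fake : log (1 - d) - log (1 - a) < -((d - a) / (1 - a)) := by
    have hne : (1 - d) / (1 - a) ≠ 1 := by
      rw [Ne, div_eq_one_iff_eq ha1.ne']; linarith
    rw [← log_div hd1.ne' ha1.ne']
    calc log ((1 - d) / (1 - a)) < (1 - d) / (1 - a) - 1 :=
          log_lt_sub_one_of_pos (div_pos hd1 ha1) hne
      _ = -((d - a) / (1 - a)) := by field_simp; ring
  have hweights : p * ((d - a) / a) ≤ q * ((d - a) / (1 - a)) := by
    rw [mul_div_assoc', mul_div_assoc', div_le_div_iff₀ ha ha1]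
    nlinarith [mul_le_mul_of_nonneg_left hr (sub_pos.mpr had).le]
  linarith [mul_le_mul_of_nonneg_left hlog_real hp, mul_lt_mul_of_pos_left hlog_fake hq]

lemma eq_of_isMinOn_floodedBCE_of_ratio_le {breal bfake p q d : ℝ} (hbf : 0 < bfake)
    (hac : 1 - exp (-bfake) ≤ exp (-breal)) (hp : 0 ≤ p) (hq : 0 < q)
    (hr : p / (p + q) ≤ 1 - exp (-bfake)) (hd : d ∈ Ioo 0 1)
    (hmin : IsMinOn (floodedBCE breal bfake p q) (Ioo 0 1) d) :
    d = 1 - exp (-bfake) := by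
  set a := 1 - exp (-bfake) with ha_def
  have ha : a ∈ Ioo 0 1 := ⟨by linarith [exp_lt_one_iff.mpr (neg_lt_zero.mpr hbf)],
    by linarith [exp_pos (-bfake)]⟩
  have hlog_one_sub_a : log (1 - a) = -bfake := by rw [ha_def, sub_sub_cancel, log_exp]
  have hlog_a : breal ≤ -log a := by
    have := log_le_log ha.1 hac
    rw [log_exp] at this; linarith
  have hga : floodedBCE breal bfake p q a = -p * log a + q * bfake := by
    rw [floodedBCE, hlog_one_sub_a, neg_neg, flood_self, flood_of_le hlog_a]; ring
  have hle : floodedBCE breal bfake p q d ≤ floodedBCE breal bfake p q a := hmin ha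
  obtain ⟨hd0, hd1⟩ := hd
  rcases lt_trichotomy d a with hda | hda | had
  · exfalso
    have hreal : p * log d ≤ p * log a := mul_le_mul_of_nonneg_left (log_le_log hd0 hda.le) hp
    have hfake : q * log (1 - a) < q * log (1 - d) :=
      mul_lt_mul_of_pos_left (log_lt_log (by linarith [ha.2]) (by linarith)) hq
    rw [hlog_one_sub_a] at hfake
    linarith [flooded_fake_branch_le_floodedBCE hp hq.le breal bfake d]
  · exact hda
  · exfalso
    have hr' : p * (1 - a) ≤ q * a := by
      rw [div_le_iff₀ (by linarith)] at hr; linarith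
    have hincr := bce_lt_bce_of_ratio_le hp hq ha.1 had hd1 hr'
    rw [hlog_one_sub_a] at hincr
    linarith [bce_le_floodedBCE hp hq.le breal bfake d]

theorem flooded_bce_minimizers_boundary_of_ratio_outside (breal bfake p q : ℝ)
    (hbr : 0 < breal) (hbf : 0 < bfake)
    (hsum : 1 < Real.exp (-breal) + Real.exp (-bfake))
    (hp : 0 ≤ p) (hq : 0 ≤ q) (hpq : ¬(p = 0 ∧ q = 0))
    (hratio : p / (p + q) ∉ Ioo (1 - Real.exp (-bfake)) (Real.exp (-breal))) :
    ∀ d ∈ Ioo (0:ℝ) 1,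
      IsMinOn (fun d => p * flood (-Real.log d) breal + q * flood (-Real.log (1 - d)) bfake)
        (Ioo (0:ℝ) 1) d →
      d ∈ ({1 - Real.exp (-bfake), Real.exp (-breal)} : Set ℝ) := by
  intro d hd hmin
  have hpq0 : 0 < p + q := by
    by_contra h
    exact hpq ⟨by linarith, by linarith⟩
  rw [mem_Ioo, not_and_or, not_lt, not_lt] at hratio
  rcases hratio with hr | hr
  · have hq0 : 0 < q := by
      rcases hq.lt_or_eq with hq0 | rfl
      · exact hq0
      · simp only [add_zero] at hpq0 hr
        rw [div_self hpq0.ne'] at hr; linarith [exp_pos (-bfake)]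
    exact .inl (eq_of_isMinOn_floodedBCE_of_ratio_le hbf (by linarith) hp hq0 hr hd hmin)
  · have hp0 : 0 < p := by
      rcases hp.lt_or_eq with hp0 | rfl
      · exact hp0
      · rw [zero_div] at hr; linarith [exp_pos (-breal)]
    have hr' : q / (q + p) ≤ 1 - exp (-breal) := by
      have : q / (q + p) = 1 - p / (p + q) := by field_simp; ring
      linarith
    have hd' : 1 - d ∈ Ioo (0:ℝ) 1 := ⟨by linarith [hd.2], by linarith [hd.1]⟩
    have hd_swap := eq_of_isMinOn_floodedBCE_of_ratio_le hbr (by linarith) hq hp0 hr' hd'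
      hmin.floodedBCE_swap
    exact .inr (by rw [mem_singleton_iff]; linarith)
end

section
/- Let b_real, b_fake > 0 with e^{-b_real} + e^{-b_fake} > 1, and p, q > 0 satisfying 1 - e^{-b_fake} < p/(p+q) < e^{-b_real}. Then the minimum value of g(d) = p·h(-log d, b_real) + q·h(-log(1-d), b_fake) over (0,1) equals -p·log(p/(p+q)) - q·log(q/(p+q)), the same as the minimum of the unflooded BCE objective. -/
/-!
Since `flood L b ≥ L`, the flooded objective dominates the plain binary cross-entropy
`p (-log d) + q (-log (1 - d))`, whose minimum over `(0, 1)` is attained at `d* = p / (p + q)`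
(Gibbs' inequality, from `log x ≤ x - 1`). The interval condition says exactly that both losses
exceed their flood levels at `d*`, so flooding does not change the objective there.
-/

open Real Set

lemma le_neg_log_of_lt_exp_neg {b x : ℝ} (hx : 0 < x) (h : x < exp (-b)) : b ≤ -log x := by
  linarith [(log_lt_iff_lt_exp hx).2 h]

lemma mul_log_sub_log_le {w a x : ℝ} (hw : 0 ≤ w) (ha : 0 < a) (hx : 0 < x) :
    w * (log x - log a) ≤ w * (x / a - 1) := by
  rw [← log_div hx.ne' ha.ne']
  exact mul_le_mul_of_nonneg_left (log_le_sub_one_of_pos (div_pos hx ha)) hw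

lemma binary_cross_entropy_min_le {p q d : ℝ} (hp : 0 < p) (hq : 0 < q) (hd : d ∈ Ioo (0 : ℝ) 1) :
    -(p * log (p / (p + q))) - q * log (q / (p + q)) ≤ p * -log d + q * -log (1 - d) := by
  have hpq : 0 < p + q := add_pos hp hq
  have hreal := mul_log_sub_log_le hp.le (div_pos hp hpq) hd.1
  have hfake := mul_log_sub_log_le hq.le (div_pos hq hpq) (sub_pos.2 hd.2)
  have hsum : p * (d / (p / (p + q)) - 1) + q * ((1 - d) / (q / (p + q)) - 1) = 0 := by
    field_simp
    ring
  linarith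

theorem flooded_bce_min_value_general (breal bfake p q : ℝ)
    (hp : 0 < p) (hq : 0 < q)
    (hlo : 1 - Real.exp (-bfake) < p / (p + q))
    (hhi : p / (p + q) < Real.exp (-breal)) :
    IsLeast
      ((fun d => p * flood (-Real.log d) breal + q * flood (-Real.log (1 - d)) bfake) ''
        Ioo (0:ℝ) 1)
      (-(p * Real.log (p / (p + q))) - q * Real.log (q / (p + q))) := by
  have hpq : 0 < p + q := add_pos hp hq
  have hcompl : 1 - p / (p + q) = q / (p + q) := by
    field_simp
    ring
  have hreal : breal ≤ -log (p / (p + q)) := le_neg_log_of_lt_exp_neg (div_pos hp hpq) hhi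
  have hfake : bfake ≤ -log (q / (p + q)) :=
    le_neg_log_of_lt_exp_neg (div_pos hq hpq) (by linarith)
  refine ⟨⟨p / (p + q), ⟨div_pos hp hpq, (div_lt_one hpq).2 (by linarith)⟩, ?_⟩, ?_⟩
  · simp only [hcompl, flood_of_le hreal, flood_of_le hfake]
    ring
  · rintro _ ⟨d, hd, rfl⟩
    calc -(p * log (p / (p + q))) - q * log (q / (p + q))
        ≤ p * -log d + q * -log (1 - d) := binary_cross_entropy_min_le hp hq hd
      _ ≤ p * flood (-log d) breal + q * flood (-log (1 - d)) bfake := by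
        gcongr <;> exact le_flood _ _

theorem flooded_bce_min_value (breal bfake p q : ℝ)
    (hbr : 0 < breal) (hbf : 0 < bfake)
    (hsum : 1 < Real.exp (-breal) + Real.exp (-bfake))
    (hp : 0 < p) (hq : 0 < q)
    (hlo : 1 - Real.exp (-bfake) < p / (p + q))
    (hhi : p / (p + q) < Real.exp (-breal)) :
    IsLeast
      ((fun d => p * flood (-Real.log d) breal + q * flood (-Real.log (1 - d)) bfake) ''
        Ioo (0:ℝ) 1)
      (-(p * Real.log (p / (p + q))) - q * Real.log (q / (p + q))) :=
  flooded_bce_min_value_general breal bfake p q hp hq hlo hhi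
end
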